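/- Let g be a guard, Z a set of valuations, Z' = Post_{g,∅}(Z), and let L', U' and L_new, U_new be LU-bound functions with L'(x) ≤ L_new(x) and U'(x) ≤ U_new(x) for every clock x. If Z ⊆ a_{L'U'}(Z'), then Post_{g,∅}(a_{L_newU_new}(Z)) ⊆ a_{L'U'}(Z'). -/

import Mathlib

/-! Common framework: clocks, valuations, guards, zones, timed automata,
LU-bounds and LU-abstraction, following the paper's definitions. -/

abbrev Val (X : Type*) := X → NNReal

/-- Time delay: `v + δ`. -/
def delay {X : Type*} (v : Val X) (δ : NNReal) : Val X := fun x => v x + δ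

open Classical in
/-- Reset `[R]v`. -/
noncomputable def resetV {X : Type*} (R : Set X) (v : Val X) : Val X :=
  fun x => if x ∈ R then 0 else v x

/-- The valuation `0̄`. -/
def zeroVal (X : Type*) : Val X := fun _ => 0

/-- Comparison operators for atomic clock constraints. -/
inductive Cmp where
  | lt | le | eq | ge | gt

/-- Satisfaction of `a # c`. -/
def Cmp.sat : Cmp → NNReal → ℕ → Prop
  | .lt, a, c => a < (c : NNReal)
  | .le, a, c => a ≤ (c : NNReal)
  | .eq, a, c => a = (c : NNReal)
  | .ge, a, c => (c : NNReal) ≤ a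
  | .gt, a, c => (c : NNReal) < a

/-- An atomic clock constraint `x # c`. -/
structure Atomic (X : Type*) where
  clock : X
  cmp : Cmp
  bound : ℕ

/-- A guard is a finite conjunction of atomic constraints. -/
abbrev Guard (X : Type*) := List (Atomic X)

/-- `v ⊨ g`. -/
def satG {X : Type*} (v : Val X) (g : Guard X) : Prop :=
  ∀ a ∈ g, a.cmp.sat (v a.clock) a.bound

/-- Lower-bound constraints: `x > c` or `x ≥ c`. -/
def Atomic.isLower {X : Type*} (a : Atomic X) : Prop := a.cmp = Cmp.gt ∨ a.cmp = Cmp.ge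

/-- Upper-bound constraints: `x < c` or `x ≤ c`. -/
def Atomic.isUpper {X : Type*} (a : Atomic X) : Prop := a.cmp = Cmp.lt ∨ a.cmp = Cmp.le

/-- A set `W` of valuations is time-elapsed. -/
def TimeElapsed {X : Type*} (W : Set (Val X)) : Prop :=
  ∀ v ∈ W, ∀ δ : NNReal, delay v δ ∈ W

/-- `Post_{g,R}(W) = { [R]v + δ | v ∈ W, v ⊨ g, δ ∈ ℝ≥0 }`. -/
def post {X : Type*} (g : Guard X) (R : Set X) (W : Set (Val X)) : Set (Val X) :=
  { w | ∃ v ∈ W, satG v g ∧ ∃ δ : NNReal, w = delay (resetV R v) δ }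

/-- LU-bounds take values in `ℕ ∪ {−∞}`. -/
abbrev Bnd := WithBot ℕ

/-- `b < r` where `b ∈ ℕ ∪ {−∞}` and `r ∈ ℝ≥0` (every real is greater than `−∞`). -/
def Bnd.ltVal (b : Bnd) (r : NNReal) : Prop :=
  ∀ n : ℕ, b = (n : Bnd) → (n : NNReal) < r

/-- The LU-preorder `v ⊑_LU v'`. -/
def luLe {X : Type*} (L U : X → Bnd) (v v' : Val X) : Prop :=
  ∀ x, (v' x < v x → Bnd.ltVal (L x) (v' x)) ∧ (v x < v' x → Bnd.ltVal (U x) (v x))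

/-- `a_LU(W)`. -/
def aLU {X : Type*} (L U : X → Bnd) (W : Set (Val X)) : Set (Val X) :=
  { v | ∃ v' ∈ W, luLe L U v v' }

/-- A timed automaton `(Q, q0, X, T, Acc)` (finiteness of `Q`, `X`, `trans`
is imposed as hypotheses of the theorems). -/
structure TA (Q X : Type*) where
  q0 : Q
  trans : Set (Q × Guard X × Set X × Q)
  acc : Set Q

/-- One delay or action transition between configurations. -/
def step {Q X : Type*} (A : TA Q X) (c c' : Q × Val X) : Prop :=
  (c'.1 = c.1 ∧ ∃ δ : NNReal, c'.2 = delay c.2 δ) ∨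
  (∃ g R, (c.1, g, R, c'.1) ∈ A.trans ∧ satG c.2 g ∧ c'.2 = resetV R c.2)

/-- There is a run (finite alternating sequence of delay and action transitions)
from `c` to `c'`. -/
def Reach {Q X : Type*} (A : TA Q X) : (Q × Val X) → (Q × Val X) → Prop :=
  Relation.ReflTransGen (step A)

/-- Symbolic transition `(q,W) ⇒^t (q', Post_t(W))`, union over all `t ∈ T`. -/
def symbStep {Q X : Type*} (A : TA Q X) (p p' : Q × Set (Val X)) : Prop :=
  ∃ g R, (p.1, g, R, p'.1) ∈ A.trans ∧ p'.2 = post g R p.2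

/-- The initial zone `Z0 = { 0̄ + δ | δ ∈ ℝ≥0 }`. -/
def Z0 (X : Type*) : Set (Val X) := { v | ∃ δ : NNReal, v = delay (zeroVal X) δ }

/-- Time-abstract simulation for `A`. -/
def IsTASim {Q X : Type*} (A : TA Q X) (S : (Q × Val X) → (Q × Val X) → Prop) : Prop :=
  (∀ c c', S c c' → c.1 = c'.1) ∧
  (∀ (q : Q) (v v' : Val X) (δ : NNReal) (g : Guard X) (R : Set X) (q1 : Q),
    S (q, v) (q, v') → (q, g, R, q1) ∈ A.trans → satG (delay v δ) g →
    ∃ δ' : NNReal, satG (delay v' δ') g ∧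
      S (q1, resetV R (delay v δ)) (q1, resetV R (delay v' δ')))

/-- Abstraction induced by a preorder `≼` on valuations. -/
def aAbs {X : Type*} (pre : Val X → Val X → Prop) (W : Set (Val X)) : Set (Val X) :=
  { v | ∃ v' ∈ W, pre v v' }

/-- Abstract transition `(q,W) ⇒_a (q', a(W'))` whenever `W = a(W)` and `(q,W) ⇒ (q',W')`. -/
def absStep {Q X : Type*} (A : TA Q X) (pre : Val X → Val X → Prop)
    (p p' : Q × Set (Val X)) : Prop :=
  p.2 = aAbs pre p.2 ∧ ∃ W', symbStep A p (p'.1, W') ∧ p'.2 = aAbs pre W'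

/-! With an empty reset, `Post_{g,∅}(W)` consists of delays `v + δ` of guard-satisfying `v ∈ W`.
Shrinking the bounds coarsens the LU-preorder, which is transitive and compatible with delays, so
`a_{L_new U_new}(Z) ⊆ a_{L'U'}(Z) ⊆ a_{L'U'}(a_{L'U'}(Z')) ⊆ a_{L'U'}(Z')`, and the last set is
closed under delays because `Z'` is. -/

namespace Bnd

theorem ltVal.of_le {b b' : Bnd} {r : NNReal} (hb : b ≤ b') (h : b'.ltVal r) : b.ltVal r := by
  rintro n rfl
  obtain ⟨m, rfl, hnm⟩ := WithBot.coe_le_iff.mp hb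
  exact lt_of_le_of_lt (by exact_mod_cast hnm) (h m rfl)

theorem ltVal.trans_le {b : Bnd} {r r' : NNReal} (h : b.ltVal r) (hr : r ≤ r') : b.ltVal r' :=
  fun n hn => (h n hn).trans_le hr

end Bnd

section LUPreorder

variable {X : Type*} {L U : X → Bnd}

theorem luLe.of_le {L' U' : X → Bnd} (hL : ∀ x, L x ≤ L' x) (hU : ∀ x, U x ≤ U' x)
    {v v' : Val X} (h : luLe L' U' v v') : luLe L U v v' := fun x =>
  ⟨fun hx => ((h x).1 hx).of_le (hL x), fun hx => ((h x).2 hx).of_le (hU x)⟩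

theorem luLe.trans {u v w : Val X} (huv : luLe L U u v) (hvw : luLe L U v w) :
    luLe L U u w := by
  intro x
  constructor
  · intro hx
    rcases lt_or_ge (w x) (v x) with h | h
    · exact (hvw x).1 h
    · exact ((huv x).1 (h.trans_lt hx)).trans_le h
  · intro hx
    rcases lt_or_ge (u x) (v x) with h | h
    · exact (huv x).2 h
    · exact ((hvw x).2 (h.trans_lt hx)).trans_le h

theorem luLe.delay {v v' : Val X} (h : luLe L U v v') (δ : NNReal) :
    luLe L U (delay v δ) (delay v' δ) := by
  intro x
  simp only [_root_.delay, add_lt_add_iff_right]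
  exact ⟨fun hx => ((h x).1 hx).trans_le le_self_add,
    fun hx => ((h x).2 hx).trans_le le_self_add⟩

theorem aLU_subset_aLU_of_le {L' U' : X → Bnd} (hL : ∀ x, L x ≤ L' x) (hU : ∀ x, U x ≤ U' x)
    (W : Set (Val X)) : aLU L' U' W ⊆ aLU L U W := fun _ ⟨v', hv', h⟩ =>
  ⟨v', hv', h.of_le hL hU⟩

theorem aLU_mono {W W' : Set (Val X)} (h : W ⊆ W') : aLU L U W ⊆ aLU L U W' :=
  fun _ ⟨v', hv', hv⟩ => ⟨v', h hv', hv⟩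

theorem aLU_aLU_subset (W : Set (Val X)) : aLU L U (aLU L U W) ⊆ aLU L U W :=
  fun _ ⟨_, ⟨w, hw, huw⟩, hvu⟩ => ⟨w, hw, hvu.trans huw⟩

theorem TimeElapsed.aLU {W : Set (Val X)} (hW : TimeElapsed W) : TimeElapsed (aLU L U W) :=
  fun _ ⟨v', hv', h⟩ δ => ⟨delay v' δ, hW v' hv' δ, h.delay δ⟩

end LUPreorder

theorem resetV_empty {X : Type*} (v : Val X) : resetV (∅ : Set X) v = v := by
  funext x
  simp [resetV]

theorem post_timeElapsed {X : Type*} (g : Guard X) (R : Set X) (W : Set (Val X)) :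
    TimeElapsed (post g R W) := by
  rintro w ⟨v, hv, hg, δ₀, rfl⟩ δ
  exact ⟨v, hv, hg, δ₀ + δ, by funext x; simp [delay, add_assoc]⟩

theorem stmt_11_general {X : Type*} (g : Guard X) (Z : Set (Val X))
    (L' U' Lnew Unew : X → Bnd)
    (hL : ∀ x, L' x ≤ Lnew x) (hU : ∀ x, U' x ≤ Unew x)
    (hZ : Z ⊆ aLU L' U' (post g (∅ : Set X) Z)) :
    post g (∅ : Set X) (aLU Lnew Unew Z) ⊆ aLU L' U' (post g (∅ : Set X) Z) := by
  rintro _ ⟨v, hv, -, δ, rfl⟩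
  rw [resetV_empty]
  have hv' : v ∈ aLU L' U' (post g ∅ Z) :=
    aLU_aLU_subset _ (aLU_mono hZ (aLU_subset_aLU_of_le hL hU Z hv))
  exact (post_timeElapsed g ∅ Z).aLU v hv' δ

/-- if `Z ⊆ a_{L'U'}(Z')`, the guard need not be incorporated:
`Post_{g,∅}(a_{L_newU_new}(Z)) ⊆ a_{L'U'}(Z')`. -/
theorem stmt_11 {X : Type*} [Finite X] (g : Guard X) (Z : Set (Val X))
    (L' U' Lnew Unew : X → Bnd)
    (hL : ∀ x, L' x ≤ Lnew x) (hU : ∀ x, U' x ≤ Unew x)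
    (hZ : Z ⊆ aLU L' U' (post g (∅ : Set X) Z)) :
    post g (∅ : Set X) (aLU Lnew Unew Z) ⊆ aLU L' U' (post g (∅ : Set X) Z) :=
  stmt_11_general g Z L' U' Lnew Unew hL hU hZ
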